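/- Let K be a field, let n ≥ 3, and let B : K^n → K^n be a K-linear map such that the induced map ⋀²B on the second exterior power ⋀²(K^n) is the identity. Then B = id or B = −id. -/
import Mathlib


open ExteriorAlgebra

lemma extract_coeff (K : Type*) [Field K] (n : ℕ) (k l : Fin n) (v w : Fin n → K) :
    (ExteriorAlgebra.liftAlternating
      (Function.update (fun _ => 0)
        2 ((Matrix.detRowAlternating).compLinearMap (LinearMap.funLeft K K ![k, l]))))
      (ι K v * ι K w) = v k * w l - v l * w k := by
  have h : ι K v * ι K w = ιMulti K 2 ![v, w] := by
    simp [ιMulti_apply, List.ofFn_succ]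
  rw [h, liftAlternating_apply_ιMulti, Function.update_self,
    AlternatingMap.compLinearMap_apply]
  rw [show (Matrix.detRowAlternating fun i => (LinearMap.funLeft K K ![k, l]) (![v, w] i) : K)
      = (Matrix.of fun i j => ![v, w] i (![k, l] j)).det from rfl]
  rw [Matrix.det_fin_two]
  simp

/-- Let `K` be a field, `n ≥ 3`, and `B : K^n → K^n` a `K`-linear map such that the
induced map `⋀²B` on the second exterior power is the identity, i.e.
`B v ∧ B w = v ∧ w` for all `v, w`. Then `B = id` or `B = -id`. -/
theorem linear_map_trivial_on_exterior_square_is_pm_id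
    (K : Type*) [Field K] (n : ℕ) (hn : 3 ≤ n)
    (B : (Fin n → K) →ₗ[K] (Fin n → K))
    (hB : ∀ v w : Fin n → K,
      ExteriorAlgebra.ι K (B v) * ExteriorAlgebra.ι K (B w) =
        ExteriorAlgebra.ι K v * ExteriorAlgebra.ι K w) :
    B = LinearMap.id ∨ B = -LinearMap.id := by
  -- all 2x2 minors are preserved
  have hM : ∀ (k l : Fin n) (v w : Fin n → K),
      (B v) k * (B w) l - (B v) l * (B w) k = v k * w l - v l * w k := by
    intro k l v w
    have := congrArg (ExteriorAlgebra.liftAlternating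
      (Function.update (fun _ => 0)
        2 ((Matrix.detRowAlternating).compLinearMap (LinearMap.funLeft K K ![k, l]))))
      (hB v w)
    rwa [extract_coeff, extract_coeff] at this
  -- existence of a third index
  have hthird : ∀ i k : Fin n, ∃ j : Fin n, j ≠ i ∧ j ≠ k := by
    intro i k
    by_contra hc
    push_neg at hc
    have hsub : (Finset.univ : Finset (Fin n)) ⊆ {i, k} := by
      intro j _
      rcases eq_or_ne j i with rfl | hne
      · simp
      · simp [hc j hne]
    have := Finset.card_le_card hsub
    simp [Finset.card_univ] at this
    have h2 : ({i, k} : Finset (Fin n)).card ≤ 2 := Finset.card_insert_le _ _ |>.trans (by simp)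
    omega
  -- off-diagonal entries vanish
  have hoff : ∀ i k : Fin n, k ≠ i → B (Pi.single i 1) k = 0 := by
    intro i k hki
    obtain ⟨j, hji, hjk⟩ := hthird i k
    have h1 := hM k j (Pi.single i 1) (Pi.single j 1)
    have h2 := hM k i (Pi.single i 1) (Pi.single j 1)
    have h3 := hM i j (Pi.single i 1) (Pi.single j 1)
    simp [Pi.single_apply, hki, hji, hjk, (hji.symm : i ≠ j), Ne.symm hjk, Ne.symm hji] at h1 h2 h3
    linear_combination (B (Pi.single i 1) i) * h1 - (B (Pi.single i 1) j) * h2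
      - (B (Pi.single i 1) k) * h3
  -- diagonal products are 1
  have hdiag : ∀ i j : Fin n, i ≠ j →
      B (Pi.single i 1) i * B (Pi.single j 1) j = 1 := by
    intro i j hij
    have h3 := hM i j (Pi.single i 1) (Pi.single j 1)
    rw [hoff i j (Ne.symm hij), hoff j i hij] at h3
    simp [Pi.single_apply, hij, Ne.symm hij] at h3
    exact h3
  set c : Fin n → K := fun i => B (Pi.single i 1) i with hc
  -- all diagonal entries are equal
  have hall : ∀ i j : Fin n, c i = c j := by
    intro i j
    rcases eq_or_ne i j with rfl | hij
    · rfl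
    obtain ⟨p, hpi, hpj⟩ := hthird i j
    have e1 : c i * c p = 1 := hdiag i p (Ne.symm hpi)
    have e2 : c j * c p = 1 := hdiag j p (Ne.symm hpj)
    have hp0 : c p ≠ 0 := by
      intro h; rw [h, mul_zero] at e1; exact zero_ne_one e1
    have h0 : (c i - c j) * c p = 0 := by linear_combination e1 - e2
    exact sub_eq_zero.mp ((mul_eq_zero.mp h0).resolve_right hp0)
  -- the common value squares to 1
  set i0 : Fin n := ⟨0, by omega⟩ with hi0
  set i1 : Fin n := ⟨1, by omega⟩ with hi1
  have h01 : i0 ≠ i1 := by simp [hi0, hi1, Fin.ext_iff]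
  have hsq : c i0 * c i0 = 1 := by
    nth_rewrite 2 [hall i0 i1]
    exact hdiag i0 i1 h01
  have hB1 : ∀ j : Fin n, B (Pi.single j 1) = Pi.single j (c i0) := by
    intro j
    funext k
    rcases eq_or_ne k j with rfl | hk
    · rw [Pi.single_eq_same]
      exact (hall k i0)
    · rw [hoff j k hk, Pi.single_eq_of_ne hk]
  have hBx : ∀ (j : Fin n) (x : K), B (Pi.single j x) = x • (Pi.single j (c i0) : Fin n → K) := by
    intro j x
    have hx : (Pi.single j x : Fin n → K) = x • (Pi.single j 1 : Fin n → K) := by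
      funext k
      rcases eq_or_ne k j with rfl | hk
      · simp
      · simp [Pi.single_eq_of_ne hk]
    rw [hx, map_smul, hB1]
  rcases mul_self_eq_one_iff.mp hsq with h1 | h1
  · left
    apply LinearMap.pi_ext
    intro j x
    rw [hBx, h1, LinearMap.id_apply]
    funext k
    rcases eq_or_ne k j with rfl | hk
    · simp
    · simp [Pi.single_eq_of_ne hk]
  · right
    apply LinearMap.pi_ext
    intro j x
    rw [hBx, h1]
    funext k
    rcases eq_or_ne k j with rfl | hk
    · simp
    · simp [Pi.single_eq_of_ne hk]
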